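/- arXiv:2101.12018 — 3 statements merged into one kernel-verified Lean document; each statement's English description precedes it below -/
import Mathlib

section
/- Let G be a connected graph obtained from a connected graph H by attaching at a vertex v two pendant paths P₁ = x₁−⋯−x_p and P₂ = y₁−⋯−y_q (with edges v−x₁ and v−y₁), where p, q ≥ 1. Then the set of vertices of G that resolve the pair x₁, y₁ is exactly {x₁,…,x_p} ∪ {y₁,…,y_q}. -/
/-- `x : Fin ℓ → V` is a pendant path attached at `v`. -/
def IsPendantPath {V : Type*} [Fintype V] (G : SimpleGraph V) [DecidableRel G.Adj]
    (v : V) {ℓ : ℕ} (x : Fin ℓ → V) : Prop :=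
  Function.Injective x ∧ v ∉ Set.range x ∧
  (∀ h : 0 < ℓ, G.Adj v (x ⟨0, h⟩)) ∧
  (∀ (i : ℕ) (h : i + 1 < ℓ), G.Adj (x ⟨i, Nat.lt_of_succ_lt h⟩) (x ⟨i + 1, h⟩)) ∧
  (∀ (i : ℕ) (h : i + 1 < ℓ), G.degree (x ⟨i, Nat.lt_of_succ_lt h⟩) = 2) ∧
  (∀ h : 0 < ℓ, G.degree (x ⟨ℓ - 1, Nat.sub_lt h one_pos⟩) = 1)

namespace PendantAux

open SimpleGraph

variable {V : Type*} [Fintype V] {G : SimpleGraph V} [DecidableRel G.Adj] {v : V}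

/-- If a vertex has degree 1 and a known neighbor, that's the only neighbor. -/
lemma eq_of_degree_one {t a u : V} (hd : G.degree t = 1)
    (ha : G.Adj t a) (hu : G.Adj t u) : u = a := by
  classical
  by_contra hne
  have hsub : ({u, a} : Finset V) ⊆ G.neighborFinset t := by
    intro z hz
    simp only [Finset.mem_insert, Finset.mem_singleton] at hz
    rcases hz with rfl | rfl <;> simp [mem_neighborFinset, hu, ha]
  have hcard : ({u, a} : Finset V).card = 2 := by
    rw [Finset.card_insert_of_notMem (by simpa using hne), Finset.card_singleton]
  have := Finset.card_le_card hsub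
  rw [hcard, ← degree, hd] at this
  omega

/-- If a vertex has degree 2 and two distinct known neighbors, those are all. -/
lemma eq_of_degree_two {t a b u : V} (hd : G.degree t = 2)
    (ha : G.Adj t a) (hb : G.Adj t b) (hab : a ≠ b) (hu : G.Adj t u) :
    u = a ∨ u = b := by
  classical
  by_contra hne
  push_neg at hne
  obtain ⟨hua, hub⟩ := hne
  have hsub : ({u, a, b} : Finset V) ⊆ G.neighborFinset t := by
    intro z hz
    simp only [Finset.mem_insert, Finset.mem_singleton] at hz
    rcases hz with rfl | rfl | rfl <;> simp [mem_neighborFinset, hu, ha, hb]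
  have hcard : ({u, a, b} : Finset V).card = 3 := by
    rw [Finset.card_insert_of_notMem (by simp [hua, hub]),
      Finset.card_insert_of_notMem (by simpa using hab), Finset.card_singleton]
  have := Finset.card_le_card hsub
  rw [hcard, ← degree, hd] at this
  omega

variable {ℓ : ℕ} {x : Fin ℓ → V}

/-- Classification of neighbors of vertices on a pendant path. -/
lemma neighbor_classify (hx : IsPendantPath G v x)
    {i : ℕ} (hi : i < ℓ) {u : V} (hu : G.Adj (x ⟨i, hi⟩) u) :
    (∃ j, ∃ hj : j < ℓ, u = x ⟨j, hj⟩ ∧ (j = i + 1 ∨ i = j + 1)) ∨ (i = 0 ∧ u = v) := by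
  obtain ⟨hinj, hvr, hadj0, hadjs, hdeg2, hdeg1⟩ := hx
  by_cases hsucc : i + 1 < ℓ
  · have hb : G.Adj (x ⟨i, hi⟩) (x ⟨i + 1, hsucc⟩) := hadjs i hsucc
    have hd : G.degree (x ⟨i, hi⟩) = 2 := hdeg2 i hsucc
    rcases Nat.eq_zero_or_eq_succ_pred i with h0 | hpred
    · subst h0
      have ha : G.Adj (x ⟨0, hi⟩) v := (hadj0 (by omega)).symm
      rcases eq_of_degree_two hd ha hb
          (fun h => hvr ⟨_, h.symm⟩) hu with rfl | rfl
      · exact Or.inr ⟨rfl, rfl⟩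
      · exact Or.inl ⟨1, hsucc, rfl, Or.inl rfl⟩
    · set k := i - 1 with hk
      have hik : i = k + 1 := hpred
      have hkl : k + 1 < ℓ := by omega
      have ha : G.Adj (x ⟨i, hi⟩) (x ⟨k, by omega⟩) := by
        have := hadjs k hkl
        have hii : (⟨k + 1, hkl⟩ : Fin ℓ) = ⟨i, hi⟩ := by simp [hik]
        rw [hii] at this
        exact this.symm
      have hab : x (⟨k, by omega⟩ : Fin ℓ) ≠ x ⟨i + 1, hsucc⟩ := by
        intro h
        have := hinj h
        simp only [Fin.mk.injEq] at this
        omega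
      rcases eq_of_degree_two hd ha hb hab hu with rfl | rfl
      · exact Or.inl ⟨k, by omega, rfl, Or.inr hik⟩
      · exact Or.inl ⟨i + 1, hsucc, rfl, Or.inl rfl⟩
  · -- i = ℓ - 1, degree 1
    have hil : i = ℓ - 1 := by omega
    have hd : G.degree (x ⟨i, hi⟩) = 1 := by
      have := hdeg1 (by omega)
      have hii : (⟨ℓ - 1, Nat.sub_lt (by omega) one_pos⟩ : Fin ℓ) = ⟨i, hi⟩ := by simp [hil]
      rwa [hii] at this
    rcases Nat.eq_zero_or_eq_succ_pred i with h0 | hpred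
    · subst h0
      have ha : G.Adj (x ⟨0, hi⟩) v := (hadj0 (by omega)).symm
      have := eq_of_degree_one hd ha hu
      exact Or.inr ⟨rfl, this⟩
    · set k := i - 1 with hk
      have hik : i = k + 1 := hpred
      have hkl : k + 1 < ℓ := by omega
      have ha : G.Adj (x ⟨i, hi⟩) (x ⟨k, by omega⟩) := by
        have := hadjs k hkl
        have hii : (⟨k + 1, hkl⟩ : Fin ℓ) = ⟨i, hi⟩ := by simp [hik]
        rw [hii] at this
        exact this.symm
      have := eq_of_degree_one hd ha hu
      exact Or.inl ⟨k, by omega, this, Or.inr hik⟩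

/-- Distance along the pendant path. -/
lemma dist_along (hG : G.Connected) (hx : IsPendantPath G v x) :
    ∀ (k j : ℕ) (h : j + k < ℓ),
      G.dist (x ⟨j, by omega⟩) (x ⟨j + k, h⟩) ≤ k := by
  obtain ⟨hinj, hvr, hadj0, hadjs, hdeg2, hdeg1⟩ := hx
  intro k
  induction k with
  | zero => intro j h; simp
  | succ m ih =>
    intro j h
    have h1 : j + m < ℓ := by omega
    have htr := hG.dist_triangle (u := x ⟨j, by omega⟩) (v := x ⟨j + m, h1⟩)
      (w := x ⟨j + (m + 1), h⟩)
    have hadj : G.Adj (x ⟨j + m, h1⟩) (x ⟨j + (m + 1), h⟩) := by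
      have := hadjs (j + m) (by omega)
      have he : (⟨j + m + 1, by omega⟩ : Fin ℓ) = ⟨j + (m + 1), h⟩ := by
        simp only [Fin.mk.injEq]; omega
      rwa [he] at this
    have h2 : G.dist (x ⟨j + m, h1⟩) (x ⟨j + (m + 1), h⟩) ≤ 1 :=
      (SimpleGraph.dist_eq_one_iff_adj.mpr hadj).le
    have h3 := ih j h1
    omega

/-- Distance from `v` to `x i` is at most `i + 1`. -/
lemma dist_v_le (hG : G.Connected) (hx : IsPendantPath G v x) (i : ℕ) (hi : i < ℓ) :
    G.dist v (x ⟨i, hi⟩) ≤ i + 1 := by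
  have h0 : 0 < ℓ := by omega
  have hd0 : G.dist v (x ⟨0, h0⟩) ≤ 1 :=
    (SimpleGraph.dist_eq_one_iff_adj.mpr (hx.2.2.1 h0)).le
  have htr := hG.dist_triangle (u := v) (v := x ⟨0, h0⟩) (w := x ⟨i, hi⟩)
  have hal := dist_along hG hx i 0 (by omega)
  have he : (⟨0 + i, by omega⟩ : Fin ℓ) = ⟨i, hi⟩ := by
    simp only [Fin.mk.injEq]; omega
  rw [he] at hal
  omega

/-- Distance between path vertices is at most the index difference. -/
lemma dist_path_le (hG : G.Connected) (hx : IsPendantPath G v x)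
    (i j : ℕ) (hi : i < ℓ) (hj : j < ℓ) :
    G.dist (x ⟨j, hj⟩) (x ⟨i, hi⟩) ≤ max i j - min i j := by
  rcases le_total j i with h | h
  · have := dist_along hG hx (i - j) j (by omega)
    have he : (⟨j + (i - j), by omega⟩ : Fin ℓ) = ⟨i, hi⟩ := by
      simp only [Fin.mk.injEq]; omega
    rw [he] at this
    calc G.dist (x ⟨j, hj⟩) (x ⟨i, hi⟩) ≤ i - j := this
      _ ≤ max i j - min i j := by omega
  · have := dist_along hG hx (j - i) i (by omega)
    have he : (⟨i + (j - i), by omega⟩ : Fin ℓ) = ⟨j, hj⟩ := by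
      simp only [Fin.mk.injEq]; omega
    rw [he] at this
    rw [SimpleGraph.dist_comm]
    calc G.dist (x ⟨i, hi⟩) (x ⟨j, hj⟩) ≤ j - i := this
      _ ≤ max i j - min i j := by omega

/-- Key lower bound: distances to pendant-path vertices. -/
lemma dist_lb (hG : G.Connected) (hx : IsPendantPath G v x) :
    ∀ (n : ℕ) (w : V) (i : ℕ) (hi : i < ℓ), G.dist w (x ⟨i, hi⟩) = n →
      ((w ∉ Set.range x → G.dist w v + i + 1 ≤ n) ∧
       (∀ (j : ℕ) (hj : j < ℓ), w = x ⟨j, hj⟩ → i ≤ n + j ∧ j ≤ n + i)) := by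
  intro n
  induction n using Nat.strong_induction_on with
  | _ n ih =>
    intro w i hi hd
    rcases Nat.eq_zero_or_pos n with rfl | hn
    · -- w = x i
      have hw : w = x ⟨i, hi⟩ := ((hG w _).dist_eq_zero_iff).mp hd
      constructor
      · intro hnr; exact absurd ⟨_, hw.symm⟩ hnr
      · intro j hj hwj
        have : (⟨i, hi⟩ : Fin ℓ) = ⟨j, hj⟩ := hx.1 (hwj ▸ hw).symm
        simp only [Fin.mk.injEq] at this
        omega
    · -- n > 0 : find a neighbor u of x i at distance n - 1 from w
      have hne : G.dist (x ⟨i, hi⟩) w ≠ 0 := by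
        rw [SimpleGraph.dist_comm]; omega
      obtain ⟨P, hP⟩ := SimpleGraph.exists_walk_of_dist_ne_zero hne
      have hPlen : P.length = n := by rw [hP, SimpleGraph.dist_comm, hd]
      obtain ⟨u, hadj, hQ⟩ : ∃ u, G.Adj (x ⟨i, hi⟩) u ∧ G.dist u w ≤ n - 1 := by
        cases P with
        | nil => simp at hPlen; omega
        | cons h P' =>
          refine ⟨_, h, ?_⟩
          rw [SimpleGraph.Walk.length_cons] at hPlen
          have := SimpleGraph.dist_le P'
          omega
      have hdu : G.dist w u = n - 1 := by
        have h1 : G.dist w u ≤ n - 1 := by rw [SimpleGraph.dist_comm]; exact hQ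
        have h2 := hG.dist_triangle (u := w) (v := u) (w := x ⟨i, hi⟩)
        have h3 : G.dist u (x ⟨i, hi⟩) ≤ 1 :=
          (SimpleGraph.dist_eq_one_iff_adj.mpr hadj.symm).le
        omega
      rcases neighbor_classify hx hi hadj with ⟨i', hi', rfl, hii'⟩ | ⟨rfl, hv⟩
      · -- u = x i'
        have IH := ih (n - 1) (by omega) w i' hi' hdu
        constructor
        · intro hnr
          have := IH.1 hnr
          omega
        · intro j hj hwj
          have := IH.2 j hj hwj
          omega
      · -- i = 0, u = v
        rw [hv] at hdu
        constructor
        · intro hnr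
          omega
        · intro j hj hwj
          have hvd : G.dist v (x ⟨j, hj⟩) = n - 1 := by
            rw [SimpleGraph.dist_comm, ← hwj]; exact hdu
          have IH := (ih (n - 1) (by omega) v j hj hvd).1 hx.2.1
          rw [SimpleGraph.dist_self] at IH
          omega

/-- For `w` off the path, `dist w (x i) = dist w v + i + 1`. -/
lemma dist_eq_off (hG : G.Connected) (hx : IsPendantPath G v x)
    {w : V} (hw : w ∉ Set.range x) (i : ℕ) (hi : i < ℓ) :
    G.dist w (x ⟨i, hi⟩) = G.dist w v + i + 1 := by
  have hub : G.dist w (x ⟨i, hi⟩) ≤ G.dist w v + (i + 1) := by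
    have h1 := hG.dist_triangle (u := w) (v := v) (w := x ⟨i, hi⟩)
    have h2 := dist_v_le hG hx i hi
    omega
  have hlb := (dist_lb hG hx _ w i hi rfl).1 hw
  omega

/-- `dist v (x i) = i + 1`. -/
lemma dist_v_eq (hG : G.Connected) (hx : IsPendantPath G v x) (i : ℕ) (hi : i < ℓ) :
    G.dist v (x ⟨i, hi⟩) = i + 1 := by
  have := dist_eq_off hG hx hx.2.1 i hi
  rw [SimpleGraph.dist_self] at this; omega

/-- `dist (x i) (x 0) = i`. -/
lemma dist_x0_eq (hG : G.Connected) (hx : IsPendantPath G v x)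
    (i : ℕ) (hi : i < ℓ) (h0 : 0 < ℓ) :
    G.dist (x ⟨i, hi⟩) (x ⟨0, h0⟩) = i := by
  have hub := dist_path_le hG hx 0 i h0 hi
  have hlb := (dist_lb hG hx _ (x ⟨i, hi⟩) 0 h0 rfl).2 i hi rfl
  omega

end PendantAux

theorem stmt6 {V : Type*} [Fintype V] (G : SimpleGraph V) [DecidableRel G.Adj]
    (hG : G.Connected) (v : V) {p q : ℕ} (hp : 0 < p) (hq : 0 < q)
    (x : Fin p → V) (y : Fin q → V)
    (hx : IsPendantPath G v x) (hy : IsPendantPath G v y)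
    (hdisj : Disjoint (Set.range x) (Set.range y)) :
    ∀ w : V, G.dist w (x ⟨0, hp⟩) ≠ G.dist w (y ⟨0, hq⟩) ↔
      w ∈ Set.range x ∪ Set.range y := by
  intro w
  by_cases hwx : w ∈ Set.range x
  · obtain ⟨⟨i, hi⟩, rfl⟩ := hwx
    have hwy : x ⟨i, hi⟩ ∉ Set.range y :=
      fun h => Set.disjoint_left.mp hdisj ⟨_, rfl⟩ h
    have d1 := PendantAux.dist_x0_eq hG hx i hi hp
    have d2 := PendantAux.dist_eq_off hG hy hwy 0 hq
    have d3 : G.dist (x ⟨i, hi⟩) v = i + 1 := by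
      rw [SimpleGraph.dist_comm]; exact PendantAux.dist_v_eq hG hx i hi
    rw [d3] at d2
    constructor
    · intro _; exact Or.inl ⟨_, rfl⟩
    · intro _; omega
  · by_cases hwy : w ∈ Set.range y
    · obtain ⟨⟨j, hj⟩, rfl⟩ := hwy
      have d1 := PendantAux.dist_x0_eq hG hy j hj hq
      have d2 := PendantAux.dist_eq_off hG hx hwx 0 hp
      have d3 : G.dist (y ⟨j, hj⟩) v = j + 1 := by
        rw [SimpleGraph.dist_comm]; exact PendantAux.dist_v_eq hG hy j hj
      rw [d3] at d2
      constructor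
      · intro _; exact Or.inr ⟨_, rfl⟩
      · intro _; omega
    · have d1 := PendantAux.dist_eq_off hG hx hwx 0 hp
      have d2 := PendantAux.dist_eq_off hG hy hwy 0 hq
      constructor
      · intro h; exact absurd (by omega : G.dist w (x ⟨0, hp⟩) = G.dist w (y ⟨0, hq⟩)) h
      · intro h
        rcases h with h | h
        · exact absurd h hwx
        · exact absurd h hwy
end

section
/- Let G be a connected graph obtained by attaching at a vertex v two pendant paths with p = ⌈k/2⌉ and q = ⌊k/2⌋ vertices respectively (k ≥ 2). Then every k-resolving set of G contains all p + q = k vertices of the two pendant paths. -/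
/-- `R` is a `k`-resolving set for `G`: every pair of distinct vertices is resolved
by at least `k` vertices of `R`. -/
def IsKResolvingSet {V : Type*} [Fintype V] [DecidableEq V] (G : SimpleGraph V)
    (k : ℕ) (R : Finset V) : Prop :=
  ∀ u v : V, u ≠ v → k ≤ (R.filter (fun w => G.dist w u ≠ G.dist w v)).card

/-- The neighbors of a vertex on a pendant path are only the adjacent path vertices
(or `v` for the first vertex). -/
lemma pendant_adj {V : Type*} [Fintype V] [DecidableEq V] {G : SimpleGraph V}
    [DecidableRel G.Adj] {v : V} {ℓ : ℕ} {x : Fin ℓ → V} (hx : IsPendantPath G v x)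
    {i : ℕ} (hi : i < ℓ) {u : V} (hu : G.Adj (x ⟨i, hi⟩) u) :
    (i = 0 ∧ u = v) ∨ (∃ h : i + 1 < ℓ, u = x ⟨i + 1, h⟩) ∨
      (∃ (j : ℕ) (h : j < ℓ), i = j + 1 ∧ u = x ⟨j, h⟩) := by
  obtain ⟨hinj, hv, hadj0, hadjc, hdeg2, hdeg1⟩ := hx
  have huN : u ∈ G.neighborFinset (x ⟨i, hi⟩) := by
    rw [SimpleGraph.mem_neighborFinset]; exact hu
  by_cases hilast : i + 1 < ℓ
  · -- internal vertex: degree 2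
    have hcard : (G.neighborFinset (x ⟨i, hi⟩)).card = 2 := hdeg2 i hilast
    rcases Nat.eq_zero_or_eq_succ_pred i with hi0 | hisucc
    · subst hi0
      have h1 : v ∈ G.neighborFinset (x ⟨0, hi⟩) := by
        rw [SimpleGraph.mem_neighborFinset]; exact (hadj0 hi).symm
      have h2 : x ⟨1, hilast⟩ ∈ G.neighborFinset (x ⟨0, hi⟩) := by
        rw [SimpleGraph.mem_neighborFinset]; exact hadjc 0 hilast
      have hne : v ≠ x ⟨1, hilast⟩ := fun h => hv ⟨_, h.symm⟩
      have hsub : ({v, x ⟨1, hilast⟩} : Finset V) ⊆ G.neighborFinset (x ⟨0, hi⟩) := by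
        intro a ha; simp only [Finset.mem_insert, Finset.mem_singleton] at ha
        rcases ha with rfl | rfl <;> assumption
      have heq := Finset.eq_of_subset_of_card_le hsub
        (by rw [hcard, Finset.card_pair hne])
      rw [← heq] at huN
      simp only [Finset.mem_insert, Finset.mem_singleton] at huN
      rcases huN with rfl | rfl
      · exact Or.inl ⟨rfl, rfl⟩
      · exact Or.inr (Or.inl ⟨hilast, rfl⟩)
    · obtain ⟨j, rfl⟩ : ∃ j, i = j + 1 := ⟨i - 1, hisucc⟩
      have hj : j < ℓ := by omega
      have h1 : x ⟨j, hj⟩ ∈ G.neighborFinset (x ⟨j + 1, hi⟩) := by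
        rw [SimpleGraph.mem_neighborFinset]
        exact (hadjc j (by omega)).symm
      have h2 : x ⟨j + 2, hilast⟩ ∈ G.neighborFinset (x ⟨j + 1, hi⟩) := by
        rw [SimpleGraph.mem_neighborFinset]
        exact hadjc (j + 1) hilast
      have hne : x ⟨j, hj⟩ ≠ x ⟨j + 2, hilast⟩ := by
        intro h; have := hinj h; simp at this
      have hsub : ({x ⟨j, hj⟩, x ⟨j + 2, hilast⟩} : Finset V) ⊆
          G.neighborFinset (x ⟨j + 1, hi⟩) := by
        intro a ha; simp only [Finset.mem_insert, Finset.mem_singleton] at ha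
        rcases ha with rfl | rfl <;> assumption
      have heq := Finset.eq_of_subset_of_card_le hsub
        (by rw [hcard, Finset.card_pair hne])
      rw [← heq] at huN
      simp only [Finset.mem_insert, Finset.mem_singleton] at huN
      rcases huN with rfl | rfl
      · exact Or.inr (Or.inr ⟨j, hj, rfl, rfl⟩)
      · exact Or.inr (Or.inl ⟨hilast, rfl⟩)
  · -- last vertex: degree 1
    have hiℓ : i = ℓ - 1 := by omega
    have hℓpos : 0 < ℓ := by omega
    have hfin : (⟨i, hi⟩ : Fin ℓ) = ⟨ℓ - 1, Nat.sub_lt hℓpos one_pos⟩ :=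
      Fin.mk_eq_mk.mpr hiℓ
    have hcard : (G.neighborFinset (x ⟨i, hi⟩)).card = 1 := by
      rw [hfin]; exact hdeg1 hℓpos
    rcases Nat.eq_zero_or_eq_succ_pred i with hi0 | hisucc
    · subst hi0
      have h1 : v ∈ G.neighborFinset (x ⟨0, hi⟩) := by
        rw [SimpleGraph.mem_neighborFinset]; exact (hadj0 hℓpos).symm
      have heq := Finset.eq_of_subset_of_card_le
        (Finset.singleton_subset_iff.mpr h1) (by rw [hcard, Finset.card_singleton])
      rw [← heq, Finset.mem_singleton] at huN
      exact Or.inl ⟨rfl, huN⟩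
    · obtain ⟨j, rfl⟩ : ∃ j, i = j + 1 := ⟨i - 1, hisucc⟩
      have hj : j < ℓ := by omega
      have h1 : x ⟨j, hj⟩ ∈ G.neighborFinset (x ⟨j + 1, hi⟩) := by
        rw [SimpleGraph.mem_neighborFinset]
        exact (hadjc j (by omega)).symm
      have heq := Finset.eq_of_subset_of_card_le
        (Finset.singleton_subset_iff.mpr h1) (by rw [hcard, Finset.card_singleton])
      rw [← heq, Finset.mem_singleton] at huN
      exact Or.inr (Or.inr ⟨j, hj, rfl, huN⟩)

/-- Any walk from a pendant-path vertex `x i` to a vertex `w` outside the path has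
length at least `dist w v + i + 1`. -/
lemma pendant_walk_le {V : Type*} [Fintype V] [DecidableEq V] {G : SimpleGraph V}
    [DecidableRel G.Adj] {v : V} {ℓ : ℕ} {x : Fin ℓ → V} (hx : IsPendantPath G v x)
    {w : V} (hw : w ∉ Set.range x) :
    ∀ (n i : ℕ) (hi : i < ℓ) (W : G.Walk (x ⟨i, hi⟩) w), W.length = n →
      G.dist w v + i + 1 ≤ n := by
  intro n
  induction n using Nat.strong_induction_on with
  | _ n IH =>
    intro i hi W hW
    cases W with
    | nil => exact absurd ⟨_, rfl⟩ hw
    | @cons _ u _ h W' =>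
      simp only [SimpleGraph.Walk.length_cons] at hW
      rcases pendant_adj hx hi h with ⟨hi0, rfl⟩ | ⟨h2, rfl⟩ | ⟨j, hj, rfl, rfl⟩
      · subst hi0
        have := SimpleGraph.dist_le W'
        rw [SimpleGraph.dist_comm] at this
        omega
      · have := IH W'.length (by omega) (i + 1) h2 W' rfl
        omega
      · have := IH W'.length (by omega) j hj W' rfl
        omega

/-- For `w` outside a pendant path, the distance to the first path vertex is
`dist w v + 1`. -/
lemma pendant_dist_zero {V : Type*} [Fintype V] [DecidableEq V] {G : SimpleGraph V}
    [DecidableRel G.Adj] (hG : G.Connected) {v : V} {ℓ : ℕ} {x : Fin ℓ → V}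
    (hx : IsPendantPath G v x) (hℓ : 0 < ℓ) {w : V} (hw : w ∉ Set.range x) :
    G.dist w (x ⟨0, hℓ⟩) = G.dist w v + 1 := by
  have hle : G.dist w (x ⟨0, hℓ⟩) ≤ G.dist w v + 1 := by
    calc G.dist w (x ⟨0, hℓ⟩) ≤ G.dist w v + G.dist v (x ⟨0, hℓ⟩) := hG.dist_triangle
    _ ≤ G.dist w v + 1 := by
        have : G.dist v (x ⟨0, hℓ⟩) ≤ 1 :=
          SimpleGraph.dist_le (SimpleGraph.Walk.cons (hx.2.2.1 hℓ) SimpleGraph.Walk.nil)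
        omega
  have hge : G.dist w v + 1 ≤ G.dist w (x ⟨0, hℓ⟩) := by
    obtain ⟨W, hWl⟩ := hG.exists_walk_length_eq_dist (x ⟨0, hℓ⟩) w
    have := pendant_walk_le hx hw W.length 0 hℓ W rfl
    rw [hWl, SimpleGraph.dist_comm (u := x ⟨0, hℓ⟩)] at this
    omega
  omega

theorem stmt7 {V : Type*} [Fintype V] [DecidableEq V] (G : SimpleGraph V)
    [DecidableRel G.Adj] (hG : G.Connected) (k : ℕ) (hk : 2 ≤ k) (v : V)
    (x : Fin ((k + 1) / 2) → V) (y : Fin (k / 2) → V)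
    (hx : IsPendantPath G v x) (hy : IsPendantPath G v y)
    (hdisj : Disjoint (Set.range x) (Set.range y))
    (R : Finset V) (hR : IsKResolvingSet G k R) :
    ∀ w : V, w ∈ Set.range x ∪ Set.range y → w ∈ R := by
  have hp : 0 < (k + 1) / 2 := by omega
  have hq : 0 < k / 2 := by omega
  set u₁ := x ⟨0, hp⟩ with hu₁
  set u₂ := y ⟨0, hq⟩ with hu₂
  have hne : u₁ ≠ u₂ := by
    intro h
    exact (hdisj.ne_of_mem ⟨_, rfl⟩ ⟨_, rfl⟩) h
  set F := R.filter (fun w => G.dist w u₁ ≠ G.dist w u₂) with hF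
  have hkF : k ≤ F.card := hR u₁ u₂ hne
  set T : Finset V := Finset.univ.image x ∪ Finset.univ.image y with hT
  have hFT : F ⊆ T := by
    intro w hwF
    rw [hF, Finset.mem_filter] at hwF
    by_contra hwT
    have hwx : w ∉ Set.range x := by
      intro ⟨a, ha⟩
      exact hwT (Finset.mem_union_left _ (Finset.mem_image.mpr ⟨a, Finset.mem_univ a, ha⟩))
    have hwy : w ∉ Set.range y := by
      intro ⟨a, ha⟩
      exact hwT (Finset.mem_union_right _ (Finset.mem_image.mpr ⟨a, Finset.mem_univ a, ha⟩))
    have h1 := pendant_dist_zero hG hx hp hwx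
    have h2 := pendant_dist_zero hG hy hq hwy
    exact hwF.2 (h1.trans h2.symm)
  have hTcard : T.card ≤ k := by
    have hdisjT : Disjoint (Finset.univ.image x) (Finset.univ.image y) := by
      rw [Finset.disjoint_left]
      intro a hax hay
      rw [Finset.mem_image] at hax hay
      obtain ⟨i, -, rfl⟩ := hax
      obtain ⟨j, -, hj⟩ := hay
      exact hdisj.ne_of_mem (⟨i, rfl⟩ : x i ∈ Set.range x)
        (⟨j, rfl⟩ : y j ∈ Set.range y) hj.symm
    rw [hT, Finset.card_union_of_disjoint hdisjT,
      Finset.card_image_of_injective _ hx.1, Finset.card_image_of_injective _ hy.1,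
      Finset.card_univ, Finset.card_univ, Fintype.card_fin, Fintype.card_fin]
    omega
  have hFeq : F = T := Finset.eq_of_subset_of_card_le hFT (by omega)
  intro w hw
  have hwT : w ∈ T := by
    rcases hw with ⟨a, rfl⟩ | ⟨a, rfl⟩
    · exact Finset.mem_union_left _ (Finset.mem_image.mpr ⟨a, Finset.mem_univ a, rfl⟩)
    · exact Finset.mem_union_right _ (Finset.mem_image.mpr ⟨a, Finset.mem_univ a, rfl⟩)
  rw [← hFeq, hF, Finset.mem_filter] at hwT
  exact hwT.1
end

section
/- Let n and k−1 be positive integers with (k−1) ∣ n and r = n/(k−1). For i = 0,…,r−1 let T_i be the tuple set T_{p_i, k−1} with p_i = n+1+2i(k−1), built over pairwise distinct symbols a_{n+1},…,a_{3n}, b_{n+1},…,b_{3n}, c_{n+1},…,c_{3n} (where T_{p,q} consists of the 3q² tuples (a_i,b_j), (b_i,c_j), (c_i,a_j) for p ≤ i ≤ p+q−1 and p+q ≤ j ≤ p+2q−1). Then the sets T_0, …, T_{r−1} are pairwise disjoint, their union T' has exactly 3n(k−1) tuples, and T' covers every element of {a_{n+1},…,a_{3n}, b_{n+1},…,b_{3n},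 c_{n+1},…,c_{3n}} exactly k−1 times. -/
/-- The tuple set `T_{p,q}` over the symbol families `a`, `b`, `c`. -/
def tupleSet {α : Type*} [DecidableEq α] (a b c : ℕ → α) (p q : ℕ) : Finset (α × α) :=
  ((Finset.Ico p (p + q)) ×ˢ (Finset.Ico (p + q) (p + 2 * q))).image
    (fun ij => (a ij.1, b ij.2)) ∪
  ((Finset.Ico p (p + q)) ×ˢ (Finset.Ico (p + q) (p + 2 * q))).image
    (fun ij => (b ij.1, c ij.2)) ∪
  ((Finset.Ico p (p + q)) ×ˢ (Finset.Ico (p + q) (p + 2 * q))).image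
    (fun ij => (c ij.1, a ij.2))

def tg {α : Type*} (a b c : ℕ → α) : ℕ × ℕ × ℕ → α × α
  | (0, i, j) => (a i, b j)
  | (1, i, j) => (b i, c j)
  | (_, i, j) => (c i, a j)

section aux
variable {α : Type*} [DecidableEq α] (a b c : ℕ → α)

lemma tupleSet_eq_image (p q : ℕ) :
    tupleSet a b c p q =
      ((Finset.range 3) ×ˢ ((Finset.Ico p (p + q)) ×ˢ (Finset.Ico (p + q) (p + 2 * q)))).image
        (tg a b c) := by
  ext t
  simp only [tupleSet, Finset.mem_union, Finset.mem_image, Finset.mem_product,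
    Finset.mem_range, Prod.exists]
  constructor
  · rintro ((⟨i, j, h, rfl⟩ | ⟨i, j, h, rfl⟩) | ⟨i, j, h, rfl⟩)
    · exact ⟨0, i, j, ⟨by omega, h⟩, rfl⟩
    · exact ⟨1, i, j, ⟨by omega, h⟩, rfl⟩
    · exact ⟨2, i, j, ⟨by omega, h⟩, rfl⟩
  · rintro ⟨ty, i, j, ⟨hty, h⟩, rfl⟩
    interval_cases ty
    · exact Or.inl (Or.inl ⟨i, j, h, rfl⟩)
    · exact Or.inl (Or.inr ⟨i, j, h, rfl⟩)
    · exact Or.inr ⟨i, j, h, rfl⟩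

variable (ha : Function.Injective a) (hb : Function.Injective b) (hc : Function.Injective c)
    (hab : ∀ i j, a i ≠ b j) (hac : ∀ i j, a i ≠ c j) (hbc : ∀ i j, b i ≠ c j)

include ha hb hc hab hac hbc in
lemma tg_injOn : Set.InjOn (tg a b c) {x | x.1 < 3} := by
  rintro ⟨t1, i1, j1⟩ h1 ⟨t2, i2, j2⟩ h2 h
  simp only [Set.mem_setOf_eq] at h1 h2
  interval_cases t1 <;> interval_cases t2 <;>
    simp only [tg, Prod.mk.injEq] at h ⊢ <;>
    first
      | exact ⟨rfl, ha h.1, hb h.2⟩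
      | exact ⟨rfl, hb h.1, hc h.2⟩
      | exact ⟨rfl, hc h.1, ha h.2⟩
      | exact ⟨trivial, ha h.1, hb h.2⟩
      | exact ⟨trivial, hb h.1, hc h.2⟩
      | exact ⟨trivial, hc h.1, ha h.2⟩
      | exact absurd h.1 (hab _ _)
      | exact absurd h.1 (hac _ _)
      | exact absurd h.1 (hbc _ _)
      | exact absurd h.1.symm (hab _ _)
      | exact absurd h.1.symm (hac _ _)
      | exact absurd h.1.symm (hbc _ _)

end aux

section aux2
set_option linter.unusedSectionVars false
variable {α : Type*} [DecidableEq α] {a b c : ℕ → α}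
variable (ha : Function.Injective a) (hb : Function.Injective b) (hc : Function.Injective c)
    (hab : ∀ i j, a i ≠ b j) (hac : ∀ i j, a i ≠ c j) (hbc : ∀ i j, b i ≠ c j)

include ha hb hc hab hac hbc

lemma card_tupleSet (p q : ℕ) : (tupleSet a b c p q).card = 3 * (q * q) := by
  rw [tupleSet_eq_image, Finset.card_image_of_injOn
    (Set.InjOn.mono (fun x hx => by
      simp only [Finset.coe_product, Set.mem_prod, Finset.mem_coe, Finset.mem_range] at hx
      exact hx.1) (tg_injOn a b c ha hb hc hab hac hbc))]
  rw [Finset.card_product, Finset.card_product, Nat.card_Ico, Nat.card_Ico, Finset.card_range]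
  have : p + 2 * q - (p + q) = q := by omega
  rw [this]
  have : p + q - p = q := by omega
  rw [this]

lemma disjoint_tupleSet {p1 p2 q : ℕ} (h : p1 + 2 * q ≤ p2 ∨ p2 + 2 * q ≤ p1) :
    Disjoint (tupleSet a b c p1 q) (tupleSet a b c p2 q) := by
  rw [Finset.disjoint_left]
  intro t h1 h2
  rw [tupleSet_eq_image] at h1 h2
  simp only [Finset.mem_image, Finset.mem_product, Finset.mem_range, Prod.exists] at h1 h2
  obtain ⟨ty1, i1, j1, ⟨hty1, hi1⟩, heq1⟩ := h1
  obtain ⟨ty2, i2, j2, ⟨hty2, hi2⟩, heq2⟩ := h2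
  have := tg_injOn a b c ha hb hc hab hac hbc (by exact hty1 : ((ty1, i1, j1) : ℕ × ℕ × ℕ).1 < 3)
    (by exact hty2) (heq1.trans heq2.symm)
  simp only [Prod.mk.injEq] at this
  simp only [Finset.mem_Ico] at hi1 hi2
  omega

lemma count_a (p q m : ℕ) :
    ((tupleSet a b c p q).filter (fun t => t.1 = a m ∨ t.2 = a m)).card =
      (if m ∈ Finset.Ico p (p + q) then q else 0) +
      (if m ∈ Finset.Ico (p + q) (p + 2 * q) then q else 0) := by
  rw [tupleSet_eq_image, Finset.filter_image, Finset.card_image_of_injOn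
    (Set.InjOn.mono (fun x hx => by
      simp only [Finset.coe_filter, Set.mem_setOf_eq, Finset.mem_product, Finset.mem_range] at hx
      exact hx.1.1) (tg_injOn a b c ha hb hc hab hac hbc))]
  rw [Finset.card_filter, Finset.sum_product, Finset.sum_range_succ, Finset.sum_range_succ,
    Finset.sum_range_succ, Finset.sum_range_zero]
  simp only [zero_add, Finset.sum_product]
  have e0 : ∀ i j : ℕ, tg a b c (0, i, j) = (a i, b j) := fun _ _ => rfl
  have e1 : ∀ i j : ℕ, tg a b c (1, i, j) = (b i, c j) := fun _ _ => rfl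
  have e2 : ∀ i j : ℕ, tg a b c (2, i, j) = (c i, a j) := fun _ _ => rfl
  have fab : ∀ j, b j = a m ↔ False := fun j => by simp [(hab m j).symm]
  have fba : ∀ i, b i = a m ↔ False := fab
  have fca : ∀ i, c i = a m ↔ False := fun i => by simp [(hac m i).symm]
  simp only [e0, e1, e2, ha.eq_iff, fab, fca, or_false, false_or, if_false,
    Finset.sum_const, Finset.sum_boole, Nat.card_Ico, smul_eq_mul]
  simp only [mul_ite, mul_one, mul_zero, Finset.sum_ite_eq', Finset.filter_eq',
    apply_ite Finset.card, Finset.card_singleton, Finset.card_empty]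
  split_ifs <;> omega

lemma count_b (p q m : ℕ) :
    ((tupleSet a b c p q).filter (fun t => t.1 = b m ∨ t.2 = b m)).card =
      (if m ∈ Finset.Ico p (p + q) then q else 0) +
      (if m ∈ Finset.Ico (p + q) (p + 2 * q) then q else 0) := by
  rw [tupleSet_eq_image, Finset.filter_image, Finset.card_image_of_injOn
    (Set.InjOn.mono (fun x hx => by
      simp only [Finset.coe_filter, Set.mem_setOf_eq, Finset.mem_product, Finset.mem_range] at hx
      exact hx.1.1) (tg_injOn a b c ha hb hc hab hac hbc))]
  rw [Finset.card_filter, Finset.sum_product, Finset.sum_range_succ, Finset.sum_range_succ,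
    Finset.sum_range_succ, Finset.sum_range_zero]
  simp only [zero_add, Finset.sum_product]
  have e0 : ∀ i j : ℕ, tg a b c (0, i, j) = (a i, b j) := fun _ _ => rfl
  have e1 : ∀ i j : ℕ, tg a b c (1, i, j) = (b i, c j) := fun _ _ => rfl
  have e2 : ∀ i j : ℕ, tg a b c (2, i, j) = (c i, a j) := fun _ _ => rfl
  have f1 : ∀ i, a i = b m ↔ False := fun i => by simp [hab i m]
  have f2 : ∀ i, c i = b m ↔ False := fun i => by simp [(hbc m i).symm]
  simp only [e0, e1, e2, hb.eq_iff, f1, f2, or_false, false_or, if_false,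
    Finset.sum_const, Finset.sum_boole, Nat.card_Ico, smul_eq_mul]
  simp only [mul_ite, mul_one, mul_zero, Finset.sum_ite_eq', Finset.filter_eq',
    apply_ite Finset.card, Finset.card_singleton, Finset.card_empty]
  split_ifs <;> omega

lemma count_c (p q m : ℕ) :
    ((tupleSet a b c p q).filter (fun t => t.1 = c m ∨ t.2 = c m)).card =
      (if m ∈ Finset.Ico p (p + q) then q else 0) +
      (if m ∈ Finset.Ico (p + q) (p + 2 * q) then q else 0) := by
  rw [tupleSet_eq_image, Finset.filter_image, Finset.card_image_of_injOn
    (Set.InjOn.mono (fun x hx => by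
      simp only [Finset.coe_filter, Set.mem_setOf_eq, Finset.mem_product, Finset.mem_range] at hx
      exact hx.1.1) (tg_injOn a b c ha hb hc hab hac hbc))]
  rw [Finset.card_filter, Finset.sum_product, Finset.sum_range_succ, Finset.sum_range_succ,
    Finset.sum_range_succ, Finset.sum_range_zero]
  simp only [zero_add, Finset.sum_product]
  have e0 : ∀ i j : ℕ, tg a b c (0, i, j) = (a i, b j) := fun _ _ => rfl
  have e1 : ∀ i j : ℕ, tg a b c (1, i, j) = (b i, c j) := fun _ _ => rfl
  have e2 : ∀ i j : ℕ, tg a b c (2, i, j) = (c i, a j) := fun _ _ => rfl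
  have f1 : ∀ i, a i = c m ↔ False := fun i => by simp [hac i m]
  have f2 : ∀ i, b i = c m ↔ False := fun i => by simp [hbc i m]
  simp only [e0, e1, e2, hc.eq_iff, f1, f2, or_false, false_or, if_false,
    Finset.sum_const, Finset.sum_boole, Nat.card_Ico, smul_eq_mul]
  simp only [mul_ite, mul_one, mul_zero, Finset.sum_ite_eq', Finset.filter_eq',
    apply_ite Finset.card, Finset.card_singleton, Finset.card_empty]
  split_ifs <;> omega

end aux2

lemma sum_blocks {q r n m : ℕ} (hq : 1 ≤ q) (hn : n = r * q) (hm1 : n + 1 ≤ m)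
    (hm2 : m ≤ 3 * n) :
    (∑ i ∈ Finset.range r,
      ((if m ∈ Finset.Ico (n + 1 + 2 * i * q) (n + 1 + 2 * i * q + q) then q else 0) +
       (if m ∈ Finset.Ico (n + 1 + 2 * i * q + q) (n + 1 + 2 * i * q + 2 * q) then q else 0)))
      = q := by
  set i0 := (m - (n + 1)) / (2 * q) with hi0
  have h2q : 0 < 2 * q := by omega
  have hdm := Nat.div_add_mod (m - (n + 1)) (2 * q)
  have hmod := Nat.mod_lt (m - (n + 1)) h2q
  rw [← hi0] at hdm
  have hi0r : i0 < r := by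
    rw [hi0, Nat.div_lt_iff_lt_mul h2q]
    have e : r * (2 * q) = 2 * (r * q) := by ring
    rw [e, ← hn]
    omega
  rw [Finset.sum_eq_single_of_mem i0 (Finset.mem_range.2 hi0r)]
  · have e : 2 * i0 * q = 2 * q * i0 := by ring
    simp only [Finset.mem_Ico, e]
    generalize hX : 2 * q * i0 = X at hdm ⊢
    split_ifs <;> omega
  · intro i hi hne
    have e : 2 * i * q = 2 * q * i := by ring
    simp only [Finset.mem_Ico, e]
    generalize hX : 2 * q * i = X at *
    split_ifs with h1 h2 <;> try rfl
    all_goals exfalso; apply hne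
    all_goals
      have e3 : i * (2 * q) = X := by rw [← hX]; ring
      have e4 : (i + 1) * (2 * q) = X + 2 * q := by rw [← hX]; ring
      have hdiv : (m - (n + 1)) / (2 * q) = i := Nat.div_eq_of_lt_le (by omega) (by omega)
      rw [hi0, hdiv]

theorem stmt12 {α : Type*} [DecidableEq α] (n k : ℕ) (hk : 2 ≤ k) (hn : 0 < n)
    (hdvd : (k - 1) ∣ n) (r : ℕ) (hr : r = n / (k - 1))
    (a b c : ℕ → α)
    (ha : Function.Injective a) (hb : Function.Injective b) (hc : Function.Injective c)
    (hab : ∀ i j, a i ≠ b j) (hac : ∀ i j, a i ≠ c j) (hbc : ∀ i j, b i ≠ c j) :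
    (∀ i < r, ∀ j < r, i ≠ j →
      Disjoint (tupleSet a b c (n + 1 + 2 * i * (k - 1)) (k - 1))
        (tupleSet a b c (n + 1 + 2 * j * (k - 1)) (k - 1))) ∧
    ((Finset.range r).biUnion
        (fun i => tupleSet a b c (n + 1 + 2 * i * (k - 1)) (k - 1))).card
      = 3 * n * (k - 1) ∧
    ∀ x ∈ (Finset.Icc (n + 1) (3 * n)).image a ∪ (Finset.Icc (n + 1) (3 * n)).image b ∪
        (Finset.Icc (n + 1) (3 * n)).image c,
      (((Finset.range r).biUnion
          (fun i => tupleSet a b c (n + 1 + 2 * i * (k - 1)) (k - 1))).filter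
        (fun t => t.1 = x ∨ t.2 = x)).card = k - 1 := by
  set q := k - 1 with hq'
  have hq : 1 ≤ q := by omega
  have hnrq : n = r * q := by
    subst hr
    exact (Nat.div_mul_cancel hdvd).symm
  have key : ∀ u v : ℕ, u < v → n + 1 + 2 * u * q + 2 * q ≤ n + 1 + 2 * v * q := by
    intro u v huv
    have h1 : (2 * u + 2) * q ≤ (2 * v) * q := Nat.mul_le_mul_right q (by omega)
    have e1 : (2 * u + 2) * q = 2 * u * q + 2 * q := by ring
    have e2 : (2 * v) * q = 2 * v * q := by ring
    omega
  have hdisj : ∀ i < r, ∀ j < r, i ≠ j →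
      Disjoint (tupleSet a b c (n + 1 + 2 * i * q) q) (tupleSet a b c (n + 1 + 2 * j * q) q) := by
    intro i _ j _ hij
    apply disjoint_tupleSet ha hb hc hab hac hbc
    rcases lt_or_gt_of_ne hij with h | h
    · exact Or.inl (key _ _ h)
    · exact Or.inr (key _ _ h)
  refine ⟨hdisj, ?_, ?_⟩
  · rw [Finset.card_biUnion (fun i hi j hj hij =>
      hdisj i (Finset.mem_range.1 hi) j (Finset.mem_range.1 hj) hij)]
    rw [Finset.sum_congr rfl (fun i _ => card_tupleSet ha hb hc hab hac hbc _ q),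
      Finset.sum_const, Finset.card_range, smul_eq_mul, hnrq]
    ring
  · intro x hx
    rw [Finset.filter_biUnion, Finset.card_biUnion (fun i hi j hj hij =>
      Finset.disjoint_filter_filter
        (hdisj i (Finset.mem_range.1 hi) j (Finset.mem_range.1 hj) hij))]
    simp only [Finset.mem_union, Finset.mem_image, Finset.mem_Icc] at hx
    rcases hx with (⟨m, hm, rfl⟩ | ⟨m, hm, rfl⟩) | ⟨m, hm, rfl⟩
    · rw [Finset.sum_congr rfl (fun i _ => count_a ha hb hc hab hac hbc _ q m)]
      exact sum_blocks hq hnrq (by omega) (by omega)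
    · rw [Finset.sum_congr rfl (fun i _ => count_b ha hb hc hab hac hbc _ q m)]
      exact sum_blocks hq hnrq (by omega) (by omega)
    · rw [Finset.sum_congr rfl (fun i _ => count_c ha hb hc hab hac hbc _ q m)]
      exact sum_blocks hq hnrq (by omega) (by omega)
end
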